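/- For every language L over Σ, ((L⁺)ᶜ⁺)ᶜ⁺ differs from (L⁺)ᶜ⁺ᶜ by at most the empty word; more weakly, the closure of any language under the two operations K ↦ Kᶜ and K ↦ K⁺ contains at most finitely many languages up to membership of ε. -/

import Mathlib

open scoped Computability symmDiff

/-- The positive Kleene closure `L⁺` of a language. -/
def Language.plus {α : Type*} (L : Language α) : Language α := L * L∗

/-- Languages expressible from L by complement and positive closure. -/
inductive Language.ExprCP {α : Type*} (L : Language α) : Language α → Prop
  | base : Language.ExprCP L L
  | compl {K : Language α} : Language.ExprCP L K → Language.ExprCP L Kᶜ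
  | plus {K : Language α} : Language.ExprCP L K → Language.ExprCP L K.plus

/-!
A language `A` with `A * A ≤ A` satisfies `A⁺ = A`. The key observation is that
`(Aᶜ⁺)ᶜ` inherits this closure property from `A`: cut a factorisation of `u ++ v`
into words outside `A` at the seam between `u` and `v`. If the seam falls between
two factors, `u` or `v` lies in `Aᶜ⁺`. If it cuts a factor `x ++ y`, then `x ∉ A`
or `y ∉ A` again puts `u` or `v` into `Aᶜ⁺`, while `x, y ∈ A` would give
`x ++ y ∈ A`. Applied to `A = L⁺` this makes `((L⁺)ᶜ⁺)ᶜ` a fixed point of `⁺`,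
so the two languages of the theorem are even equal, and every expression in `L`
evaluates to one of the ten languages `X`, `Xᶜ` with
`X ∈ {L, L⁺, Lᶜ⁺, (L⁺)ᶜ⁺, ((Lᶜ)⁺)ᶜ⁺}`.
-/

namespace Language

variable {α : Type*} {K A : Language α} {w : List α}

theorem mem_plus :
    w ∈ K.plus ↔ ∃ S : List (List α), S ≠ [] ∧ w = S.flatten ∧ ∀ y ∈ S, y ∈ K := by
  constructor
  · rintro ⟨a, ha, b, hb, rfl⟩
    obtain ⟨S, rfl, hS⟩ := mem_kstar.mp hb
    exact ⟨a :: S, List.cons_ne_nil _ _, rfl, List.forall_mem_cons.mpr ⟨ha, hS⟩⟩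
  · rintro ⟨_ | ⟨a, S⟩, hne, rfl, hS⟩
    · exact absurd rfl hne
    · obtain ⟨ha, hS⟩ := List.forall_mem_cons.mp hS
      exact ⟨a, ha, S.flatten, join_mem_kstar hS, rfl⟩

theorem flatten_mem_plus {S : List (List α)} (hne : S ≠ []) (hS : ∀ y ∈ S, y ∈ K) :
    S.flatten ∈ K.plus :=
  mem_plus.mpr ⟨S, hne, rfl, hS⟩

theorem le_plus (K : Language α) : K ≤ K.plus := fun w hw =>
  mem_plus.mpr ⟨[w], List.cons_ne_nil _ _, by simp, List.forall_mem_singleton.mpr hw⟩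

theorem plus_mul_plus_le (K : Language α) : K.plus * K.plus ≤ K.plus := by
  intro w hw
  obtain ⟨_, hu, _, hv, rfl⟩ := mem_mul.mp hw
  obtain ⟨Su, hSu, rfl, hKu⟩ := mem_plus.mp hu
  obtain ⟨Sv, -, rfl, hKv⟩ := mem_plus.mp hv
  rw [← List.flatten_append]
  exact flatten_mem_plus (by simp [hSu]) (List.forall_mem_append.mpr ⟨hKu, hKv⟩)

theorem flatten_mem_of_mul_le (hA : A * A ≤ A) {S : List (List α)} (hne : S ≠ [])
    (hS : ∀ y ∈ S, y ∈ A) : S.flatten ∈ A := by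
  induction S with
  | nil => exact absurd rfl hne
  | cons a S ih =>
    obtain ⟨ha, hS⟩ := List.forall_mem_cons.mp hS
    rcases S with _ | ⟨b, S⟩
    · simpa using ha
    · exact hA ⟨a, ha, _, ih (List.cons_ne_nil _ _) hS, rfl⟩

theorem plus_eq_self_iff : K.plus = K ↔ K * K ≤ K := by
  refine ⟨fun h => h ▸ plus_mul_plus_le K, fun hK => le_antisymm ?_ (le_plus K)⟩
  intro w hw
  obtain ⟨S, hne, rfl, hS⟩ := mem_plus.mp hw
  exact flatten_mem_of_mul_le hK hne hS

@[simp]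
theorem plus_plus (K : Language α) : K.plus.plus = K.plus :=
  plus_eq_self_iff.mpr (plus_mul_plus_le K)

theorem compl_plus_compl_mul_le (hA : A * A ≤ A) :
    (Aᶜ.plus)ᶜ * (Aᶜ.plus)ᶜ ≤ (Aᶜ.plus)ᶜ := by
  rintro _ ⟨u, hu, v, hv, rfl⟩ huv
  obtain ⟨S, hne, hflat, hS⟩ := mem_plus.mp huv
  rcases List.append_eq_flatten_iff.mp hflat with
    ⟨pre, post, rfl, rfl, rfl⟩ | ⟨pre, x, c, cs, post, rfl, rfl, rfl⟩
  · rcases eq_or_ne pre [] with rfl | hpre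
    · exact hv (flatten_mem_plus (by simpa using hne) fun y hy => hS y (by simp [hy]))
    · exact hu (flatten_mem_plus hpre fun y hy => hS y (by simp [hy]))
  · have hx : x ∈ A := by
      by_contra hx
      rw [← List.flatten_concat] at hu
      exact hu (flatten_mem_plus (by simp) (List.forall_mem_append.mpr
        ⟨fun y hy => hS y (by simp [hy]), List.forall_mem_singleton.mpr hx⟩))
    have hy : c :: cs ∈ A := by
      by_contra hy
      rw [← List.flatten_cons] at hv
      exact hv (flatten_mem_plus (List.cons_ne_nil _ _)
        (List.forall_mem_cons.mpr ⟨hy, fun y hy' => hS y (by simp [hy'])⟩))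
    exact hS _ (by simp) (hA ⟨x, hx, _, hy, rfl⟩)

theorem plus_compl_plus_compl (hA : A * A ≤ A) : (Aᶜ.plus)ᶜ.plus = (Aᶜ.plus)ᶜ :=
  plus_eq_self_iff.mpr (compl_plus_compl_mul_le hA)

@[simp]
theorem plus_compl_plus_compl_plus (K : Language α) :
    (K.plusᶜ.plus)ᶜ.plus = (K.plusᶜ.plus)ᶜ :=
  plus_compl_plus_compl (plus_mul_plus_le K)

def cpGenerators (L : Language α) : Set (Language α) :=
  {L, L.plus, Lᶜ.plus, L.plusᶜ.plus, Lᶜ.plusᶜ.plus}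

def cpClosure (L : Language α) : Set (Language α) :=
  cpGenerators L ∪ compl '' cpGenerators L

theorem plus_mem_cpGenerators {L X : Language α} (hX : X ∈ cpGenerators L) :
    X.plus ∈ cpGenerators L := by
  rcases hX with rfl | rfl | rfl | rfl | rfl <;> simp [cpGenerators]

theorem compl_plus_mem_cpClosure {L X : Language α} (hX : X ∈ cpGenerators L) :
    Xᶜ.plus ∈ cpClosure L := by
  rcases hX with rfl | rfl | rfl | rfl | rfl <;> simp [cpClosure, cpGenerators]

theorem ExprCP.mem_cpClosure {L K : Language α} (hK : L.ExprCP K) : K ∈ cpClosure L := by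
  induction hK with
  | base => exact Or.inl (Or.inl rfl)
  | compl _ ih =>
    rcases ih with hX | ⟨X, hX, rfl⟩
    · exact Or.inr ⟨_, hX, rfl⟩
    · exact Or.inl (by rwa [compl_compl])
  | plus _ ih =>
    rcases ih with hX | ⟨X, hX, rfl⟩
    · exact Or.inl (plus_mem_cpGenerators hX)
    · exact compl_plus_mem_cpClosure hX

theorem cpClosure_finite (L : Language α) : (cpClosure L).Finite := by
  unfold cpClosure cpGenerators
  exact Set.toFinite _

end Language

/-- ((L⁺)ᶜ⁺)ᶜ⁺ differs from (L⁺)ᶜ⁺ᶜ by at most the empty word, and the closure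
of any language under complement and positive closure is finite up to
membership of ε. -/
theorem plus_complement_closure_finite {α : Type*} (L : Language α) :
    (((((L.plus)ᶜ).plus)ᶜ).plus ∆ (((L.plus)ᶜ).plus)ᶜ ≤ (1 : Language α)) ∧
    ∃ F : Set (Language α), F.Finite ∧
      ∀ K : Language α, L.ExprCP K → ∃ M ∈ F, K ∆ M ≤ (1 : Language α) := by
  refine ⟨?_, L.cpClosure, L.cpClosure_finite, fun K hK => ⟨K, hK.mem_cpClosure, ?_⟩⟩
  · rw [Language.plus_compl_plus_compl_plus, symmDiff_self]
    exact bot_le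
  · rw [symmDiff_self]
    exact bot_le
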